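/- Strong Normalisation: every term typable in the Add type system is strongly normalising, i.e. if Γ ⊢ t : T is derivable in Add for some context Γ and type T, then there is no infinite reduction sequence starting from t. -/

import Mathlib

set_option maxHeartbeats 1000000

/-! ## Terms of the non-deterministic call-by-value λ-calculus (de Bruijn indices) -/

inductive Tm : Type
  | var : ℕ → Tm
  | lam : Tm → Tm
  | app : Tm → Tm → Tm
  | add : Tm → Tm → Tm
  | zero : Tm
  deriving DecidableEq

namespace Tm

/-- Values: variables and abstractions. -/
inductive IsValue : Tm → Prop
  | var (n : ℕ) : IsValue (var n)
  | lam (t : Tm) : IsValue (lam t)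

/-- de Bruijn shifting: add `d` to every variable index `≥ c`. -/
def shift (d c : ℕ) : Tm → Tm
  | var n => if n < c then var n else var (n + d)
  | lam t => lam (shift d (c + 1) t)
  | app t u => app (shift d c t) (shift d c u)
  | add t u => add (shift d c t) (shift d c u)
  | zero => zero

/-- Capture-avoiding substitution of the variable `k` by `v` (removing the binder). -/
def subst (k : ℕ) (v : Tm) : Tm → Tm
  | var n => if n = k then shift k 0 v else if k < n then var (n - 1) else var n
  | lam t => lam (subst (k + 1) v t)
  | app t u => app (subst k v t) (subst k v u)
  | add t u => add (subst k v t) (subst k v u)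
  | zero => zero

/-- `ClosedUnder k t`: every free variable of `t` has index `< k`. -/
def ClosedUnder (k : ℕ) : Tm → Prop
  | var n => n < k
  | lam t => ClosedUnder (k + 1) t
  | app t u => ClosedUnder k t ∧ ClosedUnder k u
  | add t u => ClosedUnder k t ∧ ClosedUnder k u
  | zero => True

/-- Closed terms. -/
def Closed (t : Tm) : Prop := ClosedUnder 0 t

end Tm

open Tm

/-- The AC-equivalence on terms: the least congruence making `+`
associative and commutative (terms are considered modulo `Aeq`). -/
inductive Aeq : Tm → Tm → Prop
  | refl (t : Tm) : Aeq t t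
  | symm : Aeq t u → Aeq u t
  | trans : Aeq t u → Aeq u s → Aeq t s
  | comm (t u : Tm) : Aeq (.add t u) (.add u t)
  | assoc (t u s : Tm) : Aeq (.add t (.add u s)) (.add (.add t u) s)
  | lamCongr : Aeq t t' → Aeq (.lam t) (.lam t')
  | appCongr : Aeq t t' → Aeq u u' → Aeq (.app t u) (.app t' u')
  | addCongr : Aeq t t' → Aeq u u' → Aeq (.add t u) (.add t' u')

/-- One-step reduction (the five rewrite rules plus β, closed under all
contexts, and performed modulo the AC-equivalence of terms). -/
inductive Step : Tm → Tm → Prop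
  | distrRight (t u s : Tm) : Step (.app (.add t u) s) (.add (.app t s) (.app u s))
  | distrLeft (t u s : Tm) : Step (.app t (.add u s)) (.add (.app t u) (.app t s))
  | zeroApp (t : Tm) : Step (.app .zero t) .zero
  | appZero (t : Tm) : Step (.app t .zero) .zero
  | addZero (t : Tm) : Step (.add t .zero) t
  | beta (t v : Tm) : IsValue v → Step (.app (.lam t) v) (Tm.subst 0 v t)
  | appLeft : Step t t' → Step (.app t u) (.app t' u)
  | appRight : Step u u' → Step (.app t u) (.app t u')
  | addLeft : Step t t' → Step (.add t u) (.add t' u)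
  | addRight : Step u u' → Step (.add t u) (.add t u')
  | lamCongr : Step t t' → Step (.lam t) (.lam t')
  | ac : Aeq t t' → Step t' u' → Aeq u' u → Step t u

/-- Strong normalisation of a term: accessibility of the inverse reduction. -/
def SN (t : Tm) : Prop := Acc (fun a b => Step b a) t

/-- The set of strongly normalising closed terms. -/
def SNset : Set Tm := {t | Closed t ∧ SN t}

/-- Pseudo-values: abstractions and sums of pseudo-values. -/
inductive PseudoValue : Tm → Prop
  | lam (t : Tm) : PseudoValue (.lam t)
  | add : PseudoValue t → PseudoValue u → PseudoValue (.add t u)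

/-- Neutral terms: closed terms that are not pseudo-values. -/
def Neutral (t : Tm) : Prop := Closed t ∧ ¬ PseudoValue t

/-- The set of one-step reducts of `t`. -/
def Red (t : Tm) : Set Tm := {u | Step t u}

/-- The set of reducts (in any number of steps, including zero) of terms of `S`. -/
def RedStar (S : Set Tm) : Set Tm := {u | ∃ t ∈ S, Relation.ReflTransGen Step t u}

/-- The closure of a set of terms under (CR3). -/
inductive Clo (S : Set Tm) : Tm → Prop
  | base {t : Tm} : t ∈ S → Clo S t
  | step {t : Tm} : Neutral t → (∀ u, Step t u → Clo S u) → Clo S t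

/-- `clo S`: the least set containing `S` and closed under (CR3). -/
def clo (S : Set Tm) : Set Tm := {t | Clo S t}

/-- Reducibility candidates. -/
structure IsCandidate (A : Set Tm) : Prop where
  cr1 : A ⊆ SNset
  cr2 : ∀ t ∈ A, Red t ⊆ A
  cr3 : ∀ t, Neutral t → Red t ⊆ A → t ∈ A

/-- The arrow operator on sets of closed terms. -/
def CArrow (A B : Set Tm) : Set Tm := {t | Closed t ∧ ∀ u ∈ A, Tm.app t u ∈ B}

/-- The sum of two sets of (AC-classes of) terms. -/
def CSum (A B : Set Tm) : Set Tm := {s | ∃ t ∈ A, ∃ u ∈ B, Aeq s (Tm.add t u)}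

/-- The ⊞ operator on reducibility candidates. -/
def CPlus (A B : Set Tm) : Set Tm := clo (CSum A B ∪ A ∪ B)

/-! ## Types of the Add type system -/

mutual
  /-- Unit types. -/
  inductive UTy : Type
    | var : ℕ → UTy
    | arrow : UTy → Ty → UTy
    | all : UTy → UTy

  /-- Types. -/
  inductive Ty : Type
    | unit : UTy → Ty
    | add : Ty → Ty → Ty
    | zero : Ty
end

mutual
  /-- Shifting of type variables in unit types. -/
  def UTy.shift (d c : ℕ) : UTy → UTy
    | .var n => if n < c then .var n else .var (n + d)
    | .arrow U T => .arrow (UTy.shift d c U) (Ty.shift d c T)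
    | .all U => .all (UTy.shift d (c + 1) U)

  /-- Shifting of type variables in types. -/
  def Ty.shift (d c : ℕ) : Ty → Ty
    | .unit U => .unit (UTy.shift d c U)
    | .add T R => .add (Ty.shift d c T) (Ty.shift d c R)
    | .zero => .zero
end

mutual
  /-- Substitution of the (bound) type variable `k` by `V` in a unit type. -/
  def UTy.subst (k : ℕ) (V : UTy) : UTy → UTy
    | .var n => if n = k then UTy.shift k 0 V else if k < n then .var (n - 1) else .var n
    | .arrow U T => .arrow (UTy.subst k V U) (Ty.subst k V T)
    | .all U => .all (UTy.subst (k + 1) V U)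

  /-- Substitution of the (bound) type variable `k` by `V` in a type. -/
  def Ty.subst (k : ℕ) (V : UTy) : Ty → Ty
    | .unit U => .unit (UTy.subst k V U)
    | .add T R => .add (Ty.subst k V T) (Ty.subst k V R)
    | .zero => .zero
end

/-- Iterated substitution `U[V⃗/X⃗]` for a unit type under `|Vs|` quantifiers. -/
def UTy.msubst (Vs : List UTy) (U : UTy) : UTy := Vs.foldl (fun A V => UTy.subst 0 V A) U

/-- Iterated substitution `T[V⃗/X⃗]` for a type under `|Vs|` quantifiers. -/
def Ty.msubst (Vs : List UTy) (T : Ty) : Ty := Vs.foldl (fun A V => Ty.subst 0 V A) T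

mutual
  /-- Substitution of the free type variable `X` (seen at depth `c`) by `V` in a unit type. -/
  def UTy.replAux (X : ℕ) (V : UTy) (c : ℕ) : UTy → UTy
    | .var n => if n = X + c then UTy.shift c 0 V else .var n
    | .arrow U T => .arrow (UTy.replAux X V c U) (Ty.replAux X V c T)
    | .all U => .all (UTy.replAux X V (c + 1) U)

  /-- Substitution of the free type variable `X` (seen at depth `c`) by `V` in a type. -/
  def Ty.replAux (X : ℕ) (V : UTy) (c : ℕ) : Ty → Ty
    | .unit U => .unit (UTy.replAux X V c U)
    | .add T R => .add (Ty.replAux X V c T) (Ty.replAux X V c R)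
    | .zero => .zero
end

/-- Capture-avoiding substitution `U[V/X]` of a free type variable. -/
def UTy.repl (X : ℕ) (V : UTy) (U : UTy) : UTy := UTy.replAux X V 0 U

/-- Capture-avoiding substitution `T[V/X]` of a free type variable. -/
def Ty.repl (X : ℕ) (V : UTy) (T : Ty) : Ty := Ty.replAux X V 0 T

mutual
  /-- Abstraction of the free type variable `X` (at depth `c`), used to form `∀X.U`. -/
  def UTy.absAux (X c : ℕ) : UTy → UTy
    | .var n => if n = X + c then .var c else if c ≤ n then .var (n + 1) else .var n
    | .arrow U T => .arrow (UTy.absAux X c U) (Ty.absAux X c T)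
    | .all U => .all (UTy.absAux X (c + 1) U)

  /-- Abstraction of the free type variable `X` (at depth `c`) in a type. -/
  def Ty.absAux (X c : ℕ) : Ty → Ty
    | .unit U => .unit (UTy.absAux X c U)
    | .add T R => .add (Ty.absAux X c T) (Ty.absAux X c R)
    | .zero => .zero
end

/-- `∀X.U`: universal quantification of the free type variable `X` in `U`. -/
def UTy.genAll (X : ℕ) (U : UTy) : UTy := .all (UTy.absAux X 0 U)

mutual
  /-- `X` occurs free in a unit type. -/
  def UTy.Free (n : ℕ) : UTy → Prop
    | .var m => m = n
    | .arrow U T => UTy.Free n U ∨ Ty.Free n T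
    | .all U => UTy.Free (n + 1) U

  /-- `X` occurs free in a type. -/
  def Ty.Free (n : ℕ) : Ty → Prop
    | .unit U => UTy.Free n U
    | .add T R => Ty.Free n T ∨ Ty.Free n R
    | .zero => False
end

mutual
  /-- Equivalence of unit types (the least congruence making `+` on types
  associative, commutative, with neutral element `𝟘`). -/
  inductive UEq : UTy → UTy → Prop
    | refl (U : UTy) : UEq U U
    | symm : UEq U V → UEq V U
    | trans : UEq U V → UEq V W → UEq U W
    | arrow : UEq U U' → TEq T T' → UEq (.arrow U T) (.arrow U' T')
    | all : UEq U U' → UEq (.all U) (.all U')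

  /-- Equivalence of types: the least congruence such that
  `T+R ≡ R+T`, `T+(R+S) ≡ (T+R)+S` and `T+𝟘 ≡ T`. -/
  inductive TEq : Ty → Ty → Prop
    | refl (T : Ty) : TEq T T
    | symm : TEq T R → TEq R T
    | trans : TEq T R → TEq R S → TEq T S
    | unit : UEq U U' → TEq (.unit U) (.unit U')
    | addCongr : TEq T T' → TEq R R' → TEq (.add T R) (.add T' R')
    | comm (T R : Ty) : TEq (.add T R) (.add R T)
    | assoc (T R S : Ty) : TEq (.add T (.add R S)) (.add (.add T R) S)
    | zero (T : Ty) : TEq (.add T .zero) T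
end

/-- `Σ_{i} T_i`, with the empty sum being `𝟘`. -/
def sumT (Ts : List Ty) : Ty := Ts.foldl Ty.add Ty.zero

/-- `∀X₁.…∀X_k.U`. -/
def allN : ℕ → UTy → UTy
  | 0, U => U
  | k + 1, U => .all (allN k U)

/-- Lifting of type variables in a typing context (for ∀-introduction). -/
def liftCtx (Γ : List UTy) : List UTy := Γ.map (UTy.shift 1 0)

/-! ## The Add type system -/

/-- Typing judgements of the Add type system. -/
inductive Typing : List UTy → Tm → Ty → Prop
  | ax {Γ : List UTy} {n : ℕ} {U : UTy} : Γ[n]? = some U → Typing Γ (.var n) (.unit U)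
  | axZero {Γ : List UTy} : Typing Γ .zero .zero
  | equiv {Γ t T R} : Typing Γ t T → TEq T R → Typing Γ t R
  | arrI {Γ U t T} : Typing (U :: Γ) t T → Typing Γ (.lam t) (.unit (.arrow U T))
  | arrE {Γ t u} {k : ℕ} {U : UTy} {Ts : List Ty} {Vs : List (List UTy)} :
      Ts ≠ [] → Vs ≠ [] → (∀ V ∈ Vs, V.length = k) →
      Typing Γ t (sumT (Ts.map fun Ti => .unit (allN k (.arrow U Ti)))) →
      Typing Γ u (sumT (Vs.map fun Vj => .unit (UTy.msubst Vj U))) →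
      Typing Γ (.app t u)
        (sumT ((Ts.map fun Ti => Vs.map fun Vj => Ty.msubst Vj Ti).flatten))
  | addI {Γ t u T R} : Typing Γ t T → Typing Γ u R → Typing Γ (.add t u) (.add T R)
  | allE {Γ t U} (V : UTy) : Typing Γ t (.unit (.all U)) → Typing Γ t (.unit (UTy.subst 0 V U))
  | allI {Γ t U} : Typing (liftCtx Γ) t (.unit U) → Typing Γ t (.unit (.all U))

/-! ## Interpretation of types by reducibility candidates -/

/-- Extension of a valuation. -/
def consV (A : Set Tm) (ρ : ℕ → Set Tm) : ℕ → Set Tm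
  | 0 => A
  | n + 1 => ρ n

mutual
  /-- Interpretation of unit types. -/
  def interpU : UTy → (ℕ → Set Tm) → Set Tm
    | .var n, ρ => ρ n
    | .arrow U T, ρ => CArrow (interpU U ρ) (interpT T ρ)
    | .all U, ρ => {t | ∀ A : Set Tm, IsCandidate A → t ∈ interpU U (consV A ρ)}

  /-- Interpretation of types. -/
  def interpT : Ty → (ℕ → Set Tm) → Set Tm
    | .unit U, ρ => interpU U ρ
    | .add T R, ρ => CPlus (interpT T ρ) (interpT R ρ)
    | .zero, _ => clo ∅
end

/-- Lifting of a simultaneous substitution under a binder. -/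
def liftSub (σ : ℕ → Tm) : ℕ → Tm
  | 0 => .var 0
  | n + 1 => Tm.shift 1 0 (σ n)

/-- Simultaneous substitution `t_σ` of all free term variables of `t`. -/
def Tm.msubst (σ : ℕ → Tm) : Tm → Tm
  | .var n => σ n
  | .lam t => .lam (Tm.msubst (liftSub σ) t)
  | .app t u => .app (Tm.msubst σ t) (Tm.msubst σ u)
  | .add t u => .add (Tm.msubst σ t) (Tm.msubst σ u)
  | .zero => .zero

/-! ## The relations ⋖ and ≼ on types -/

/-- The relation `⋖` on unit types: `U₁ ⋖ U₂` iff either `U₂ ≡ ∀X.U₁`, or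
`U₁ ≡ ∀X.U'` and `U₂ ≡ U'[V/X]`. -/
inductive SSub : UTy → UTy → Prop
  | gen {U₁ U₂ : UTy} (X : ℕ) : UEq U₂ (UTy.genAll X U₁) → SSub U₁ U₂
  | inst {U₁ U₂ : UTy} (U' V : UTy) : UEq U₁ (.all U') → UEq U₂ (UTy.subst 0 V U') →
      SSub U₁ U₂

/-- The relation `≼`: the reflexive (with respect to `≡`) and transitive
closure of `⋖`, on types. -/
inductive TPre : Ty → Ty → Prop
  | ofEq : TEq T T' → TPre T T'
  | ofSSub {U V : UTy} : SSub U V → TPre (.unit U) (.unit V)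
  | trans : TPre T T' → TPre T' T'' → TPre T T''

/-! ## Trees and the structured type system Add_struct -/

/-- Binary trees with two kinds of leaves: `ℓ`-leaves and `𝟘`-leaves. -/
inductive ATree : Type
  | leaf : ATree
  | zleaf : ATree
  | node : ATree → ATree → ATree
  deriving DecidableEq

namespace ATree

/-- ATree composition: branch a copy of `A'` at each `ℓ`-leaf of `A`. -/
def comp : ATree → ATree → ATree
  | .leaf, A' => A'
  | .zleaf, _ => .zleaf
  | .node A B, A' => .node (comp A A') (comp B A')

/-- `LeafAt A w`: the word `w` (over `{l,r}`, here `{false,true}`) is the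
address of an `ℓ`-leaf of `A`. -/
inductive LeafAt : ATree → List Bool → Prop
  | leaf : LeafAt .leaf []
  | left {A B w} : LeafAt A w → LeafAt (.node A B) (false :: w)
  | right {A B w} : LeafAt B w → LeafAt (.node A B) (true :: w)

/-- Labelling of the `ℓ`-leaves of a tree by unit types, yielding a type. -/
def labelU : ATree → (List Bool → UTy) → Ty
  | .leaf, f => .unit (f [])
  | .zleaf, _ => .zero
  | .node A B, f => .add (labelU A fun w => f (false :: w)) (labelU B fun w => f (true :: w))

/-- Labelling of the `ℓ`-leaves of a tree by types, yielding a type. -/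
def labelT : ATree → (List Bool → Ty) → Ty
  | .leaf, f => f []
  | .zleaf, _ => .zero
  | .node A B, f => .add (labelT A fun w => f (false :: w)) (labelT B fun w => f (true :: w))

/-- Split an address of a leaf of `A ∘ A'` into the `A`-part and the `A'`-part. -/
def split : ATree → List Bool → List Bool × List Bool
  | .leaf, p => ([], p)
  | .zleaf, p => ([], p)
  | .node A _, false :: p => ((split A p).1.cons false, (split A p).2)
  | .node _ B, true :: p => ((split B p).1.cons true, (split B p).2)
  | .node _ _, [] => ([], [])

end ATree

/-- Typing derivations of the structured type system Add_struct. -/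
inductive SDeriv : List UTy → Tm → Ty → Type
  | ax (Γ : List UTy) (n : ℕ) (U : UTy) (h : Γ[n]? = some U) : SDeriv Γ (.var n) (.unit U)
  | axZero (Γ : List UTy) : SDeriv Γ .zero .zero
  | arrI {Γ U t T} (D : SDeriv (U :: Γ) t T) : SDeriv Γ (.lam t) (.unit (.arrow U T))
  | addI {Γ t u T R} (D₁ : SDeriv Γ t T) (D₂ : SDeriv Γ u R) :
      SDeriv Γ (.add t u) (.add T R)
  | allE {Γ t U} (V : UTy) (D : SDeriv Γ t (.unit (.all U))) :
      SDeriv Γ t (.unit (UTy.subst 0 V U))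
  | allI {Γ t U} (D : SDeriv (liftCtx Γ) t (.unit U)) : SDeriv Γ t (.unit (.all U))
  | arrE {Γ t u} (A A' : ATree) (k : ℕ) (U : UTy) (Tf : List Bool → Ty)
      (Vf : List Bool → List UTy)
      (hlen : ∀ v, A'.LeafAt v → (Vf v).length = k)
      (D₁ : SDeriv Γ t (A.labelU fun w => allN k (.arrow U (Tf w))))
      (D₂ : SDeriv Γ u (A'.labelU fun v => UTy.msubst (Vf v) U)) :
      SDeriv Γ (.app t u)
        ((A.comp A').labelT fun p => Ty.msubst (Vf (A.split p).2) (Tf (A.split p).1))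

/-! ## System F with pairs -/

/-- Terms of System F with pairs. -/
inductive FTm : Type
  | var : ℕ → FTm
  | lam : FTm → FTm
  | app : FTm → FTm → FTm
  | star : FTm
  | pair : FTm → FTm → FTm
  | pl : FTm → FTm
  | pr : FTm → FTm
  deriving DecidableEq

/-- Types of System F with pairs. -/
inductive FTy : Type
  | var : ℕ → FTy
  | arrow : FTy → FTy → FTy
  | all : FTy → FTy
  | one : FTy
  | prod : FTy → FTy → FTy
  deriving DecidableEq

/-- Shifting of term variables in F-terms. -/
def FTm.shift (d c : ℕ) : FTm → FTm
  | .var n => if n < c then .var n else .var (n + d)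
  | .lam t => .lam (FTm.shift d (c + 1) t)
  | .app t u => .app (FTm.shift d c t) (FTm.shift d c u)
  | .star => .star
  | .pair t u => .pair (FTm.shift d c t) (FTm.shift d c u)
  | .pl t => .pl (FTm.shift d c t)
  | .pr t => .pr (FTm.shift d c t)

/-- Substitution of the term variable `k` by `v` in an F-term. -/
def FTm.subst (k : ℕ) (v : FTm) : FTm → FTm
  | .var n => if n = k then FTm.shift k 0 v else if k < n then .var (n - 1) else .var n
  | .lam t => .lam (FTm.subst (k + 1) v t)
  | .app t u => .app (FTm.subst k v t) (FTm.subst k v u)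
  | .star => .star
  | .pair t u => .pair (FTm.subst k v t) (FTm.subst k v u)
  | .pl t => .pl (FTm.subst k v t)
  | .pr t => .pr (FTm.subst k v t)

/-- Shifting of type variables in F-types. -/
def FTy.shift (d c : ℕ) : FTy → FTy
  | .var n => if n < c then .var n else .var (n + d)
  | .arrow A B => .arrow (FTy.shift d c A) (FTy.shift d c B)
  | .all A => .all (FTy.shift d (c + 1) A)
  | .one => .one
  | .prod A B => .prod (FTy.shift d c A) (FTy.shift d c B)

/-- Substitution of the type variable `k` by `B` in an F-type. -/
def FTy.subst (k : ℕ) (B : FTy) : FTy → FTy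
  | .var n => if n = k then FTy.shift k 0 B else if k < n then .var (n - 1) else .var n
  | .arrow A A' => .arrow (FTy.subst k B A) (FTy.subst k B A')
  | .all A => .all (FTy.subst (k + 1) B A)
  | .one => .one
  | .prod A A' => .prod (FTy.subst k B A) (FTy.subst k B A')

/-- One-step reduction in System F with pairs. -/
inductive FStep : FTm → FTm → Prop
  | beta (t u : FTm) : FStep (.app (.lam t) u) (FTm.subst 0 u t)
  | plPair (t u : FTm) : FStep (.pl (.pair t u)) t
  | prPair (t u : FTm) : FStep (.pr (.pair t u)) u
  | eta (t : FTm) : FStep (.lam (.app (FTm.shift 1 0 t) (.var 0))) t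
  | sp (p : FTm) : FStep (.pair (.pl p) (.pr p)) p
  | lamCongr : FStep t t' → FStep (.lam t) (.lam t')
  | appLeft : FStep t t' → FStep (.app t u) (.app t' u)
  | appRight : FStep u u' → FStep (.app t u) (.app t u')
  | pairLeft : FStep t t' → FStep (.pair t u) (.pair t' u)
  | pairRight : FStep u u' → FStep (.pair t u) (.pair t u')
  | plCongr : FStep t t' → FStep (.pl t) (.pl t')
  | prCongr : FStep t t' → FStep (.pr t) (.pr t')

/-- Typing in System F with pairs. -/
inductive FTyping : List FTy → FTm → FTy → Prop
  | ax {Γ n A} : Γ[n]? = some A → FTyping Γ (.var n) A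
  | star {Γ} : FTyping Γ .star .one
  | lam {Γ A t B} : FTyping (A :: Γ) t B → FTyping Γ (.lam t) (.arrow A B)
  | app {Γ t u A B} : FTyping Γ t (.arrow A B) → FTyping Γ u A → FTyping Γ (.app t u) B
  | pair {Γ t u A B} : FTyping Γ t A → FTyping Γ u B → FTyping Γ (.pair t u) (.prod A B)
  | pl {Γ t A B} : FTyping Γ t (.prod A B) → FTyping Γ (.pl t) A
  | pr {Γ t A B} : FTyping Γ t (.prod A B) → FTyping Γ (.pr t) B
  | allI {Γ t A} : FTyping (Γ.map (FTy.shift 1 0)) t A → FTyping Γ t (.all A)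
  | allE {Γ t A} (B : FTy) : FTyping Γ t (.all A) → FTyping Γ t (FTy.subst 0 B A)

/-! ## The translation from Add_struct into System F with pairs -/

mutual
  /-- Translation of unit types into F-types. -/
  def transU : UTy → FTy
    | .var n => .var n
    | .arrow U T => .arrow (transU U) (transT T)
    | .all U => .all (transU U)

  /-- Translation of Add types into F-types. -/
  def transT : Ty → FTy
    | .unit U => transU U
    | .add T R => .prod (transT T) (transT R)
    | .zero => .one
end

/-- Labelling of the `ℓ`-leaves of a tree by F-terms (pairs at the nodes, `⋆`
at the `𝟘`-leaves), yielding an F-term. -/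
def ATree.labelF : ATree → (List Bool → FTm) → FTm
  | .leaf, f => f []
  | .zleaf, _ => .star
  | .node A B, f => .pair (ATree.labelF A fun w => f (false :: w))
      (ATree.labelF B fun w => f (true :: w))

/-- `π_{w̄}(t)`: the composite of projections along the mirror of the word `w`. -/
def projMirror (w : List Bool) (t : FTm) : FTm :=
  w.foldl (fun s b => if b then .pr s else .pl s) t

/-- The translation `|t|_D` of a term typed in Add_struct by a derivation `D`
into an F-term. -/
def transD : ∀ {Γ : List UTy} {t : Tm} {T : Ty}, SDeriv Γ t T → FTm
  | _, _, _, .ax _ n _ _ => .var n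
  | _, _, _, .axZero _ => .star
  | _, _, _, .arrI D => .lam (transD D)
  | _, _, _, .addI D₁ D₂ => .pair (transD D₁) (transD D₂)
  | _, _, _, .allE _ D => transD D
  | _, _, _, .allI D => transD D
  | _, _, _, .arrE A A' _ _ _ _ _ D₁ D₂ =>
      (A.comp A').labelF fun p =>
        .app (projMirror (A.split p).1 (transD D₁)) (projMirror (A.split p).2 (transD D₂))

/-! ## Structural reduction (without AC and without the rule `t+𝟎 → t`) -/

/-- One-step reduction by a rule other than `t+𝟎 → t` (and not using the
AC-equivalence, which is absent from Add_struct). -/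
inductive SStep : Tm → Tm → Prop
  | distrRight (t u s : Tm) : SStep (.app (.add t u) s) (.add (.app t s) (.app u s))
  | distrLeft (t u s : Tm) : SStep (.app t (.add u s)) (.add (.app t u) (.app t s))
  | zeroApp (t : Tm) : SStep (.app .zero t) .zero
  | appZero (t : Tm) : SStep (.app t .zero) .zero
  | beta (t v : Tm) : IsValue v → SStep (.app (.lam t) v) (Tm.subst 0 v t)
  | appLeft : SStep t t' → SStep (.app t u) (.app t' u)
  | appRight : SStep u u' → SStep (.app t u) (.app t u')
  | addLeft : SStep t t' → SStep (.add t u) (.add t' u)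
  | addRight : SStep u u' → SStep (.add t u) (.add t u')
  | lamCongr : SStep t t' → SStep (.lam t) (.lam t')

/-! ## The partial inverse translation -/

/-- Partial inverse translation on types. -/
def invTy : FTy → Option Ty
  | .var n => some (.unit (.var n))
  | .one => some .zero
  | .all A =>
    match invTy A with
    | some (.unit U) => some (.unit (.all U))
    | _ => none
  | .prod A B =>
    match invTy A, invTy B with
    | some T, some R => some (.add T R)
    | _, _ => none
  | .arrow A B =>
    match invTy A, invTy B with
    | some (.unit U), some T => some (.unit (.arrow U T))
    | _, _ => none

/-- An F-term of the shape `A[wv ↦ π_{w̄}(t) π_{v̄}(u)]` for a non-trivial tree. -/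
def IsTreeApp (s : FTm) : Prop :=
  ∃ (A A' : ATree) (t u : FTm), A.comp A' ≠ .leaf ∧ A.comp A' ≠ .zleaf ∧
    s = (A.comp A').labelF fun p =>
      .app (projMirror (A.split p).1 t) (projMirror (A.split p).2 u)

/-- The partial inverse translation on F-terms, as a relation. -/
inductive InvTm : FTm → Tm → Prop
  | var (n : ℕ) : InvTm (.var n) (.var n)
  | star : InvTm .star .zero
  | lam : InvTm t t' → InvTm (.lam t) (.lam t')
  | app : InvTm t t' → InvTm u u' → InvTm (.app t u) (.app t' u')
  | treeApp (A A' : ATree) {t u : FTm} {t' u' : Tm} :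
      A.comp A' ≠ .leaf → A.comp A' ≠ .zleaf → InvTm t t' → InvTm u u' →
      InvTm ((A.comp A').labelF fun p =>
          .app (projMirror (A.split p).1 t) (projMirror (A.split p).2 u))
        (.app t' u')
  | pair : ¬ IsTreeApp (.pair t u) → InvTm t t' → InvTm u u' →
      InvTm (.pair t u) (.add t' u')


/-!
A realizability argument in the style of Tait and Girard, carried out modulo AC. Up to `Aeq` a
term is the multiset of its summands (`Aeq t u` iff these multisets correspond elementwise up to
`Aeq`), so a reduction step modulo AC either reduces a single summand or erases a `𝟎` summand.

Types are interpreted as sets of abstractions closed under `Aeq` and reduction, a sum type by the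
union of the interpretations of its summands, so equivalent types get equal interpretations. A
term realizes such a set `S` if it is strongly normalising and every abstraction that occurs as a
summand of one of its reducts lies in `S`. The central lemma is that realizers are closed under
application; it is proved by well-founded induction on both arguments, ordered by reduction and by
passage to proper sub-sums, which is what the distributivity rules produce. Adequacy then follows
by induction on typing derivations, for substitutions by values or variables, and the identity
substitution yields strong normalisation.
-/

/-! ## Substitution lemmas -/

def consSub (v : Tm) (σ : ℕ → Tm) : ℕ → Tm
  | 0 => v
  | n + 1 => σ n

namespace Tm

theorem shift_zero (t : Tm) (c : ℕ) : shift 0 c t = t := by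
  induction t generalizing c <;> simp_all [shift]

theorem shift_shift_merge (t : Tm) {d c d' c' : ℕ} (h₁ : c ≤ c') (h₂ : c' ≤ c + d) :
    shift d' c' (shift d c t) = shift (d + d') c t := by
  induction t generalizing c c' with
  | var n => simp only [shift]; split_ifs <;> simp only [shift] <;> split_ifs <;> grind
  | lam t ih => simp only [shift, ih (c := c + 1) (c' := c' + 1) (by omega) (by omega)]
  | _ => simp_all [shift]

theorem subst_shift_cancel (t v : Tm) {k c d : ℕ} (h₁ : c ≤ k) (h₂ : k < c + d) :
    subst k v (shift d c t) = shift (d - 1) c t := by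
  induction t generalizing k c with
  | var n => simp only [shift]; split_ifs <;> simp only [subst] <;> split_ifs <;> grind
  | lam t ih => simp only [shift, subst, ih (k := k + 1) (c := c + 1) (by omega) (by omega)]
  | _ => simp_all [shift, subst]

theorem shift_subst_of_le (t v : Tm) {k d c : ℕ} (h : c ≤ k) :
    shift d c (subst k v t) = subst (k + d) v (shift d c t) := by
  induction t generalizing k c with
  | var n =>
    simp only [subst, shift]
    split_ifs <;> simp only [subst, shift] <;> split_ifs <;>
      first | grind | exact shift_shift_merge v (by omega) (by omega)
  | lam t ih =>
    simp only [shift, subst, ih (k := k + 1) (c := c + 1) (by omega), Nat.add_right_comm]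
  | _ => simp_all [shift, subst]

theorem subst_subst (b : Tm) {j k : ℕ} (v w : Tm) (h : j ≤ k) :
    subst k v (subst j w b) = subst j (subst (k - j) v w) (subst (k + 1) v b) := by
  induction b generalizing j k with
  | var n =>
    simp only [subst]
    split_ifs <;> (try simp only [subst]) <;> (try split_ifs) <;> first
      | grind
      | rw [shift_subst_of_le w v (Nat.zero_le _), Nat.sub_add_cancel h]
      | rw [subst_shift_cancel v _ (Nat.zero_le _) (by omega)]; grind
  | lam t ih =>
    simp only [subst, ih (j := j + 1) (k := k + 1) (by omega), Nat.add_sub_add_right]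
  | _ => simp_all [subst]

theorem IsValue.shift {v : Tm} (hv : IsValue v) (d c : ℕ) : IsValue (Tm.shift d c v) := by
  cases hv with
  | var n => simp only [Tm.shift]; split_ifs <;> exact .var _
  | lam t => exact .lam _

theorem IsValue.subst {v v₀ : Tm} (hv : IsValue v) (hv₀ : IsValue v₀) (k : ℕ) :
    IsValue (Tm.subst k v v₀) := by
  cases hv₀ with
  | var n => simp only [Tm.subst]; split_ifs <;> first | exact hv.shift k 0 | exact .var _
  | lam t => exact .lam _

theorem msubst_var (t : Tm) : msubst var t = t := by
  have hlift : liftSub var = var := by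
    funext n
    cases n <;> simp [liftSub, shift]
  induction t <;> simp_all [msubst]

theorem subst_msubst (t : Tm) (σ : ℕ → Tm) (k : ℕ) (v : Tm) :
    subst k v (msubst σ t) = msubst (fun n => subst k v (σ n)) t := by
  induction t generalizing σ k with
  | lam t ih =>
    simp only [msubst, subst, ih]
    congr 2
    funext n
    cases n with
    | zero => simp [liftSub, subst]
    | succ n => exact (shift_subst_of_le (σ n) v (Nat.zero_le k)).symm
  | var n => rfl
  | _ => simp_all [msubst, subst]

theorem subst_zero_msubst_liftSub (t : Tm) (σ : ℕ → Tm) (v : Tm) :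
    subst 0 v (msubst (liftSub σ) t) = msubst (consSub v σ) t := by
  rw [subst_msubst]
  congr 1
  funext n
  cases n with
  | zero => simp [liftSub, consSub, subst, shift_zero]
  | succ n => simp [liftSub, consSub, subst_shift_cancel, shift_zero]

/-! ## Summands and the AC-equivalence -/

def summands : Tm → Multiset Tm
  | var n => {var n}
  | lam t => {lam t}
  | app t u => {app t u}
  | add t u => summands t + summands u
  | zero => {zero}

theorem summands_ne_zero (t : Tm) : summands t ≠ 0 := by
  induction t <;> simp [summands, *]

theorem summands_of_ne_add {t : Tm} (h : ∀ a b, t ≠ add a b) : summands t = {t} := by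
  cases t <;> first | rfl | exact absurd rfl (h _ _)

theorem eq_of_summands_eq_singleton {t a : Tm} (h : summands t = {a}) : t = a := by
  cases t with
  | add l r =>
    have hcard := congrArg Multiset.card h
    simp only [summands, Multiset.card_add, Multiset.card_singleton] at hcard
    have := Multiset.card_pos.2 (summands_ne_zero l)
    have := Multiset.card_pos.2 (summands_ne_zero r)
    omega
  | _ => simpa [summands] using h

theorem eq_of_mem_summands_of_erase_eq_zero {t a : Tm} (ha : a ∈ summands t)
    (h : (summands t).erase a = 0) : t = a :=
  eq_of_summands_eq_singleton (by rw [← Multiset.cons_erase ha, h]; rfl)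

end Tm

namespace Aeq

instance : IsEquiv Tm Aeq where
  refl := refl
  symm _ _ := symm
  trans _ _ _ := trans

theorem add_left_comm (t u s : Tm) : Aeq (.add t (.add u s)) (.add u (.add t s)) :=
  (assoc t u s).trans ((addCongr (comm t u) (refl s)).trans (assoc u t s).symm)

def Shape : Tm → Tm → Prop
  | .var n, u => u = .var n
  | .zero, u => u = .zero
  | .lam t, u => ∃ t', u = .lam t' ∧ Aeq t t'
  | .app t s, u => ∃ t' s', u = .app t' s' ∧ Aeq t t' ∧ Aeq s s'
  | .add _ _, u => ∃ a b, u = .add a b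

theorem Shape.refl : ∀ t : Tm, Shape t t
  | .var _ | .zero => rfl
  | .lam t => ⟨t, rfl, Aeq.refl t⟩
  | .app t s => ⟨t, s, rfl, Aeq.refl t, Aeq.refl s⟩
  | .add a b => ⟨a, b, rfl⟩

theorem Shape.trans : ∀ {t u s : Tm}, Shape t u → Shape u s → Shape t s
  | .var _, _, _, rfl, h | .zero, _, _, rfl, h => h
  | .lam _, _, _, ⟨_, rfl, h⟩, ⟨t'', rfl, h'⟩ => ⟨t'', rfl, h.trans h'⟩
  | .app _ _, _, _, ⟨_, _, rfl, h₁, h₂⟩, ⟨t'', s'', rfl, h₁', h₂'⟩ =>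
    ⟨t'', s'', rfl, h₁.trans h₁', h₂.trans h₂'⟩
  | .add _ _, _, _, ⟨_, _, rfl⟩, ⟨a, b, rfl⟩ => ⟨a, b, rfl⟩

theorem shape {t u : Tm} (h : Aeq t u) : Shape t u ∧ Shape u t := by
  induction h with
  | refl t => exact ⟨Shape.refl t, Shape.refl t⟩
  | symm _ ih => exact ih.symm
  | trans _ _ ih₁ ih₂ => exact ⟨ih₁.1.trans ih₂.1, ih₂.2.trans ih₁.2⟩
  | comm | assoc | addCongr => exact ⟨⟨_, _, rfl⟩, ⟨_, _, rfl⟩⟩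
  | lamCongr h => exact ⟨⟨_, rfl, h⟩, ⟨_, rfl, h.symm⟩⟩
  | appCongr h₁ h₂ => exact ⟨⟨_, _, rfl, h₁, h₂⟩, ⟨_, _, rfl, h₁.symm, h₂.symm⟩⟩

theorem var_left {n : ℕ} {u : Tm} (h : Aeq (.var n) u) : u = .var n := (shape h).1

theorem zero_left {u : Tm} (h : Aeq .zero u) : u = .zero := (shape h).1

theorem lam_left {t u : Tm} (h : Aeq (.lam t) u) : ∃ t', u = .lam t' ∧ Aeq t t' := (shape h).1

theorem app_left {t s u : Tm} (h : Aeq (.app t s) u) :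
    ∃ t' s', u = .app t' s' ∧ Aeq t t' ∧ Aeq s s' := (shape h).1

theorem add_left {a b u : Tm} (h : Aeq (.add a b) u) : ∃ c d, u = .add c d := (shape h).1

theorem isValue {v u : Tm} (h : Aeq v u) (hv : IsValue v) : IsValue u := by
  cases hv with
  | var n => rw [var_left h]; exact .var n
  | lam t => obtain ⟨t', rfl, _⟩ := lam_left h; exact .lam t'

theorem shift {t t' : Tm} (h : Aeq t t') (d c : ℕ) : Aeq (Tm.shift d c t) (Tm.shift d c t') := by
  induction h generalizing c with
  | refl => exact refl _
  | symm _ ih => exact (ih c).symm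
  | trans _ _ ih₁ ih₂ => exact (ih₁ c).trans (ih₂ c)
  | comm => exact comm _ _
  | assoc => exact assoc _ _ _
  | lamCongr _ ih => exact lamCongr (ih (c + 1))
  | appCongr _ _ ih₁ ih₂ => exact appCongr (ih₁ c) (ih₂ c)
  | addCongr _ _ ih₁ ih₂ => exact addCongr (ih₁ c) (ih₂ c)

theorem subst_left {b b' : Tm} (h : Aeq b b') (k : ℕ) (v : Tm) :
    Aeq (Tm.subst k v b) (Tm.subst k v b') := by
  induction h generalizing k with
  | refl => exact refl _
  | symm _ ih => exact (ih k).symm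
  | trans _ _ ih₁ ih₂ => exact (ih₁ k).trans (ih₂ k)
  | comm => exact comm _ _
  | assoc => exact assoc _ _ _
  | lamCongr _ ih => exact lamCongr (ih (k + 1))
  | appCongr _ _ ih₁ ih₂ => exact appCongr (ih₁ k) (ih₂ k)
  | addCongr _ _ ih₁ ih₂ => exact addCongr (ih₁ k) (ih₂ k)

theorem subst_right (b : Tm) {v v' : Tm} (h : Aeq v v') (k : ℕ) :
    Aeq (Tm.subst k v b) (Tm.subst k v' b) := by
  induction b generalizing k with
  | var n => simp only [Tm.subst]; split_ifs <;> first | exact h.shift k 0 | exact refl _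
  | lam t ih => exact lamCongr (ih (k + 1))
  | app t u iht ihu => exact appCongr (iht k) (ihu k)
  | add t u iht ihu => exact addCongr (iht k) (ihu k)
  | zero => exact refl _

theorem subst {b b' v v' : Tm} (hb : Aeq b b') (hv : Aeq v v') (k : ℕ) :
    Aeq (Tm.subst k v b) (Tm.subst k v' b') :=
  (hb.subst_left k v).trans (subst_right b' hv k)

theorem rel_refl (M : Multiset Tm) : M.Rel Aeq M :=
  Multiset.rel_refl_of_refl_on fun a _ => Aeq.refl a

theorem rel_symm {M N : Multiset Tm} (h : M.Rel Aeq N) : N.Rel Aeq M :=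
  Multiset.rel_flip.2 h |>.mono fun _ _ _ _ h => Aeq.symm h

theorem rel_trans {M N P : Multiset Tm} (h₁ : M.Rel Aeq N) (h₂ : N.Rel Aeq P) : M.Rel Aeq P :=
  Multiset.Rel.trans Aeq h₁ h₂

theorem rel_erase_of_mem_right {M N : Multiset Tm} (h : M.Rel Aeq N) {b : Tm} (hb : b ∈ N) :
    ∃ a ∈ M, Aeq a b ∧ (M.erase a).Rel Aeq (N.erase b) := by
  rw [← Multiset.cons_erase hb, Multiset.rel_cons_right] at h
  obtain ⟨a, M', hab, hrel, rfl⟩ := h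
  exact ⟨a, Multiset.mem_cons_self a M', hab, by rwa [Multiset.erase_cons_head]⟩

theorem summands_rel {t u : Tm} (h : Aeq t u) : (summands t).Rel Aeq (summands u) := by
  induction h with
  | refl t => exact rel_refl _
  | symm _ ih => exact rel_symm ih
  | trans _ _ ih₁ ih₂ => exact rel_trans ih₁ ih₂
  | comm t u => rw [summands, summands, add_comm]; exact rel_refl _
  | assoc t u s => simp only [summands, add_assoc]; exact rel_refl _
  | lamCongr h => exact .cons (lamCongr h) .zero
  | appCongr h₁ h₂ => exact .cons (appCongr h₁ h₂) .zero
  | addCongr _ _ ih₁ ih₂ => exact ih₁.add ih₂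

theorem exists_add_of_mem_summands {t a : Tm} (ha : a ∈ summands t)
    (hne : (summands t).erase a ≠ 0) :
    ∃ r, Aeq t (.add a r) ∧ summands r = (summands t).erase a := by
  induction t with
  | add l r ihl ihr =>
    simp only [summands] at ha hne ⊢
    rcases Multiset.mem_add.1 ha with hal | har
    · rw [Multiset.erase_add_left_pos _ hal] at hne ⊢
      by_cases hl : (summands l).erase a = 0
      · obtain rfl := eq_of_mem_summands_of_erase_eq_zero hal hl
        exact ⟨r, refl _, by rw [hl, zero_add]⟩
      · obtain ⟨l', hl', hsl'⟩ := ihl hal hl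
        exact ⟨.add l' r, (addCongr hl' (refl r)).trans (assoc _ _ _).symm,
          by rw [summands, hsl']⟩
    · rw [Multiset.erase_add_right_pos _ har] at hne ⊢
      by_cases hr : (summands r).erase a = 0
      · obtain rfl := eq_of_mem_summands_of_erase_eq_zero har hr
        exact ⟨l, comm _ _, by rw [hr, add_zero]⟩
      · obtain ⟨r', hr', hsr'⟩ := ihr har hr
        exact ⟨.add l r', (addCongr (refl l) hr').trans (add_left_comm _ _ _),
          by rw [summands, hsr']⟩
  | _ =>
    rw [summands_of_ne_add (by simp), Multiset.mem_singleton] at ha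
    subst ha
    simp [summands] at hne

theorem of_summands_rel {x y : Tm} (h : (summands x).Rel Aeq (summands y)) : Aeq x y := by
  induction hn : Multiset.card (summands x) using Nat.strong_induction_on generalizing x y with
  | _ n ih =>
  obtain ⟨a, ha⟩ := Multiset.exists_mem_of_ne_zero (summands_ne_zero x)
  obtain ⟨b, hb, hab, hrel⟩ := rel_erase_of_mem_right (rel_symm h) ha
  by_cases hx : (summands x).erase a = 0
  · rw [hx, Multiset.rel_zero_right] at hrel
    rw [eq_of_mem_summands_of_erase_eq_zero hb hrel,
      eq_of_mem_summands_of_erase_eq_zero ha hx]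
    exact hab.symm
  · have hy : (summands y).erase b ≠ 0 := fun hy => hx (by rwa [hy, Multiset.rel_zero_left] at hrel)
    obtain ⟨rx, hxr, hrx⟩ := exists_add_of_mem_summands ha hx
    obtain ⟨ry, hyr, hry⟩ := exists_add_of_mem_summands hb hy
    have hlt : Multiset.card (summands rx) < n := by
      rw [hrx, ← hn]; exact Multiset.card_erase_lt_of_mem ha
    have hrxy : Aeq rx ry := ih _ hlt (by rw [hrx, hry]; exact rel_symm hrel) rfl
    exact hxr.trans ((addCongr hab.symm hrxy).trans hyr.symm)

end Aeq

/-! ## Reduction modulo AC -/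

namespace Step

theorem of_aeq_left {t t' w : Tm} (h : Aeq t t') (hs : Step t' w) : Step t w :=
  ac h hs (Aeq.refl _)

theorem exists_of_mem_summands {t a a' : Tm} (ha : a ∈ summands t) (hs : Step a a') :
    ∃ t', Step t t' ∧ (summands t').Rel Aeq ((summands t).erase a + summands a') := by
  induction t with
  | add l r ihl ihr =>
    simp only [summands] at ha ⊢
    rcases Multiset.mem_add.1 ha with hal | har
    · obtain ⟨l', hl', hrel⟩ := ihl hal
      refine ⟨.add l' r, addLeft hl', ?_⟩
      rw [Multiset.erase_add_left_pos _ hal, add_right_comm]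
      exact hrel.add (Aeq.rel_refl _)
    · obtain ⟨r', hr', hrel⟩ := ihr har
      refine ⟨.add l r', addRight hr', ?_⟩
      rw [Multiset.erase_add_right_pos _ har, add_assoc]
      exact (Aeq.rel_refl _).add hrel
  | _ =>
    rw [summands_of_ne_add (by simp), Multiset.mem_singleton] at ha
    subst ha
    exact ⟨a', hs, by simpa [summands] using Aeq.rel_refl _⟩

theorem exists_erase_zero {t : Tm} (hz : zero ∈ summands t)
    (hne : (summands t).erase zero ≠ 0) :
    ∃ t', Step t t' ∧ (summands t').Rel Aeq ((summands t).erase zero) := by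
  induction t with
  | add l r ihl ihr =>
    simp only [summands] at hz hne ⊢
    rcases Multiset.mem_add.1 hz with hl | hr
    · rw [Multiset.erase_add_left_pos _ hl] at hne ⊢
      by_cases hl0 : (summands l).erase zero = 0
      · obtain rfl := eq_of_mem_summands_of_erase_eq_zero hl hl0
        exact ⟨r, of_aeq_left (Aeq.comm _ _) (addZero r), by simpa [hl0] using Aeq.rel_refl _⟩
      · obtain ⟨l', hl', hrel⟩ := ihl hl hl0
        exact ⟨.add l' r, addLeft hl', hrel.add (Aeq.rel_refl _)⟩
    · rw [Multiset.erase_add_right_pos _ hr] at hne ⊢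
      by_cases hr0 : (summands r).erase zero = 0
      · obtain rfl := eq_of_mem_summands_of_erase_eq_zero hr hr0
        exact ⟨l, addZero l, by simpa [hr0] using Aeq.rel_refl _⟩
      · obtain ⟨r', hr', hrel⟩ := ihr hr hr0
        exact ⟨.add l r', addRight hr', (Aeq.rel_refl _).add hrel⟩
  | _ =>
    simp_all [summands]

theorem summands_cases {s w : Tm} (h : Step s w) :
    (∃ a ∈ summands s, ∃ a', Step a a' ∧
      (summands w).Rel Aeq ((summands s).erase a + summands a')) ∨
    (zero ∈ summands s ∧ (summands w).Rel Aeq ((summands s).erase zero)) := by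
  have atom : ∀ {s w}, Step s w → summands s = {s} → ∃ a ∈ summands s, ∃ a', Step a a' ∧
      (summands w).Rel Aeq ((summands s).erase a + summands a') := fun {s w} h hs =>
    ⟨s, by simp [hs], w, h, by simpa [hs] using Aeq.rel_refl _⟩
  induction h with
  | addZero t =>
    refine .inr ⟨by simp [summands], ?_⟩
    rw [summands, Multiset.erase_add_right_pos _ (by simp [summands])]
    simpa [summands] using Aeq.rel_refl _
  | @addLeft t t' u _ ih =>
    simp only [summands]
    rcases ih with ⟨a, ha, a', hs, hrel⟩ | ⟨hz, hrel⟩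
    · refine .inl ⟨a, Multiset.mem_add.2 (.inl ha), a', hs, ?_⟩
      rw [Multiset.erase_add_left_pos _ ha, add_right_comm]
      exact hrel.add (Aeq.rel_refl _)
    · refine .inr ⟨Multiset.mem_add.2 (.inl hz), ?_⟩
      rw [Multiset.erase_add_left_pos _ hz]
      exact hrel.add (Aeq.rel_refl _)
  | @addRight u u' t _ ih =>
    simp only [summands]
    rcases ih with ⟨a, ha, a', hs, hrel⟩ | ⟨hz, hrel⟩
    · refine .inl ⟨a, Multiset.mem_add.2 (.inr ha), a', hs, ?_⟩
      rw [Multiset.erase_add_right_pos _ ha, add_assoc]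
      exact (Aeq.rel_refl _).add hrel
    · refine .inr ⟨Multiset.mem_add.2 (.inr hz), ?_⟩
      rw [Multiset.erase_add_right_pos _ hz]
      exact (Aeq.rel_refl _).add hrel
  | ac ha _ hb ih =>
    have hw := Aeq.summands_rel hb.symm
    rcases ih with ⟨a₁, ha₁, a', hs, hrel⟩ | ⟨hz, hrel⟩
    · obtain ⟨a, ha, haa₁, herase⟩ := Aeq.rel_erase_of_mem_right (Aeq.summands_rel ha) ha₁
      exact .inl ⟨a, ha, a', of_aeq_left haa₁ hs,
        Aeq.rel_trans (Aeq.rel_trans hw hrel) ((Aeq.rel_symm herase).add (Aeq.rel_refl _))⟩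
    · obtain ⟨a, ha, ha0, herase⟩ := Aeq.rel_erase_of_mem_right (Aeq.summands_rel ha) hz
      obtain rfl := Aeq.zero_left ha0.symm
      exact .inr ⟨ha, Aeq.rel_trans (Aeq.rel_trans hw hrel) (Aeq.rel_symm herase)⟩
  | distrRight | distrLeft | zeroApp | appZero | beta | appLeft | appRight | lamCongr =>
    exact .inl (atom (by constructor <;> assumption) rfl)

theorem subst {t u : Tm} (h : Step t u) {v : Tm} (hv : IsValue v) (k : ℕ) :
    Step (Tm.subst k v t) (Tm.subst k v u) := by
  induction h generalizing k with
  | beta t v₀ hv₀ =>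
    rw [Tm.subst_subst t v v₀ (Nat.zero_le k)]
    exact .beta _ _ (hv.subst hv₀ k)
  | lamCongr _ ih => exact .lamCongr (ih (k + 1))
  | ac ha _ hb ih => exact .ac (ha.subst_left k v) (ih k) (hb.subst_left k v)
  | distrRight | distrLeft | zeroApp | appZero | addZero => constructor
  | appLeft _ ih => exact .appLeft (ih k)
  | appRight _ ih => exact .appRight (ih k)
  | addLeft _ ih => exact .addLeft (ih k)
  | addRight _ ih => exact .addRight (ih k)

end Step

inductive AddReduct (t u : Tm) : Tm → Prop
  | left {t' : Tm} : Step t t' → AddReduct t u (.add t' u)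
  | right {u' : Tm} : Step u u' → AddReduct t u (.add t u')
  | zeroLeft : t = .zero → AddReduct t u u
  | zeroRight : u = .zero → AddReduct t u t

inductive AppReduct (p q : Tm) : Tm → Prop
  | left {p' : Tm} : Step p p' → AppReduct p q (.app p' q)
  | right {q' : Tm} : Step q q' → AppReduct p q (.app p q')
  | distrRight {x₁ x₂ : Tm} : Aeq p (.add x₁ x₂) → AppReduct p q (.add (.app x₁ q) (.app x₂ q))
  | distrLeft {y₁ y₂ : Tm} : Aeq q (.add y₁ y₂) → AppReduct p q (.add (.app p y₁) (.app p y₂))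
  | zeroApp : p = .zero → AppReduct p q .zero
  | appZero : q = .zero → AppReduct p q .zero
  | beta {b : Tm} : p = .lam b → IsValue q → AppReduct p q (Tm.subst 0 q b)

namespace Step

-- `Aeq` can regroup a sum arbitrarily, so its reducts are located through its summands.
theorem add_inv {t u w : Tm} (h : Step (.add t u) w) : ∃ w', AddReduct t u w' ∧ Aeq w w' := by
  rcases summands_cases h with ⟨a, ha, a', hs, hrel⟩ | ⟨hz, hrel⟩ <;> simp only [summands] at *
  · rcases Multiset.mem_add.1 ha with hat | hau
    · obtain ⟨t', hst, hrel'⟩ := exists_of_mem_summands hat hs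
      rw [Multiset.erase_add_left_pos _ hat, add_right_comm] at hrel
      exact ⟨_, .left hst, Aeq.of_summands_rel <|
        Aeq.rel_trans hrel ((Aeq.rel_symm hrel').add (Aeq.rel_refl _))⟩
    · obtain ⟨u', hsu, hrel'⟩ := exists_of_mem_summands hau hs
      rw [Multiset.erase_add_right_pos _ hau, add_assoc] at hrel
      exact ⟨_, .right hsu, Aeq.of_summands_rel <|
        Aeq.rel_trans hrel ((Aeq.rel_refl _).add (Aeq.rel_symm hrel'))⟩
  · rcases Multiset.mem_add.1 hz with hzt | hzu
    · rw [Multiset.erase_add_left_pos _ hzt] at hrel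
      by_cases ht : (summands t).erase zero = 0
      · rw [ht, zero_add] at hrel
        exact ⟨u, .zeroLeft (eq_of_mem_summands_of_erase_eq_zero hzt ht), Aeq.of_summands_rel hrel⟩
      · obtain ⟨t', hst, hrel'⟩ := exists_erase_zero hzt ht
        exact ⟨_, .left hst, Aeq.of_summands_rel <|
          Aeq.rel_trans hrel ((Aeq.rel_symm hrel').add (Aeq.rel_refl _))⟩
    · rw [Multiset.erase_add_right_pos _ hzu] at hrel
      by_cases hu : (summands u).erase zero = 0
      · rw [hu, add_zero] at hrel
        exact ⟨t, .zeroRight (eq_of_mem_summands_of_erase_eq_zero hzu hu), Aeq.of_summands_rel hrel⟩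
      · obtain ⟨u', hsu, hrel'⟩ := exists_erase_zero hzu hu
        exact ⟨_, .right hsu, Aeq.of_summands_rel <|
          Aeq.rel_trans hrel ((Aeq.rel_refl _).add (Aeq.rel_symm hrel'))⟩

theorem app_inv_of_aeq {s w : Tm} (h : Step s w) {p q : Tm} (hs : Aeq s (.app p q)) :
    ∃ w', AppReduct p q w' ∧ Aeq w w' := by
  induction h generalizing p q with
  | ac ha _ hb ih =>
    obtain ⟨w', hred, hw'⟩ := ih (ha.symm.trans hs)
    exact ⟨w', hred, hb.symm.trans hw'⟩
  | distrRight =>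
    obtain ⟨_, _, ⟨⟩, hp, hq⟩ := Aeq.app_left hs
    exact ⟨_, .distrRight hp.symm,
      .addCongr (.appCongr (.refl _) hq) (.appCongr (.refl _) hq)⟩
  | distrLeft =>
    obtain ⟨_, _, ⟨⟩, hp, hq⟩ := Aeq.app_left hs
    exact ⟨_, .distrLeft hq.symm,
      .addCongr (.appCongr hp (.refl _)) (.appCongr hp (.refl _))⟩
  | zeroApp =>
    obtain ⟨_, _, ⟨⟩, hp, -⟩ := Aeq.app_left hs
    exact ⟨_, .zeroApp (Aeq.zero_left hp), .refl _⟩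
  | appZero =>
    obtain ⟨_, _, ⟨⟩, -, hq⟩ := Aeq.app_left hs
    exact ⟨_, .appZero (Aeq.zero_left hq), .refl _⟩
  | beta _ _ hv =>
    obtain ⟨_, _, ⟨⟩, hp, hq⟩ := Aeq.app_left hs
    obtain ⟨b, rfl, hb⟩ := Aeq.lam_left hp
    exact ⟨_, .beta rfl (hq.isValue hv), Aeq.subst hb hq 0⟩
  | appLeft h =>
    obtain ⟨_, _, ⟨⟩, hp, hq⟩ := Aeq.app_left hs
    exact ⟨_, .left (of_aeq_left hp.symm h), .appCongr (.refl _) hq⟩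
  | appRight h =>
    obtain ⟨_, _, ⟨⟩, hp, hq⟩ := Aeq.app_left hs
    exact ⟨_, .right (of_aeq_left hq.symm h), .appCongr hp (.refl _)⟩
  | addZero | addLeft | addRight => obtain ⟨_, _, ⟨⟩⟩ := Aeq.add_left hs
  | lamCongr => obtain ⟨_, ⟨⟩, _⟩ := Aeq.lam_left hs

theorem app_inv {p q w : Tm} (h : Step (.app p q) w) : ∃ w', AppReduct p q w' ∧ Aeq w w' :=
  app_inv_of_aeq h (.refl _)

theorem lam_inv_of_aeq {s w : Tm} (h : Step s w) {b : Tm} (hs : Aeq s (.lam b)) :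
    ∃ b', Step b b' ∧ Aeq w (.lam b') := by
  induction h generalizing b with
  | ac ha _ hb ih =>
    obtain ⟨b', hstep, hw⟩ := ih (ha.symm.trans hs)
    exact ⟨b', hstep, hb.symm.trans hw⟩
  | lamCongr h =>
    obtain ⟨_, ⟨⟩, hb⟩ := Aeq.lam_left hs
    exact ⟨_, of_aeq_left hb.symm h, .refl _⟩
  | addZero | addLeft | addRight => obtain ⟨_, _, ⟨⟩⟩ := Aeq.add_left hs
  | _ => obtain ⟨_, _, ⟨⟩, _⟩ := Aeq.app_left hs

theorem lam_inv {b w : Tm} (h : Step (.lam b) w) : ∃ b', Step b b' ∧ Aeq w (.lam b') :=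
  lam_inv_of_aeq h (.refl _)

theorem not_var {n : ℕ} {w : Tm} : ¬ Step (.var n) w := by
  generalize hs : Tm.var n = s
  intro h
  induction h with
  | ac ha _ _ ih => exact ih (Aeq.var_left (hs ▸ ha)).symm
  | _ => cases hs

theorem not_zero {w : Tm} : ¬ Step .zero w := by
  generalize hs : Tm.zero = s
  intro h
  induction h with
  | ac ha _ _ ih => exact ih (Aeq.zero_left (hs ▸ ha)).symm
  | _ => cases hs

theorem reflTransGen_add_inv {x y w : Tm}
    (hw : Relation.ReflTransGen Step (.add x y) w) :
    (∃ x' y', Relation.ReflTransGen Step x x' ∧ Relation.ReflTransGen Step y y' ∧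
      Aeq w (.add x' y')) ∨
    (∃ x', Relation.ReflTransGen Step x x' ∧ Aeq w x') ∨
    (∃ y', Relation.ReflTransGen Step y y' ∧ Aeq w y') := by
  induction hw with
  | refl => exact .inl ⟨x, y, .refl, .refl, .refl _⟩
  | tail _ hs ih =>
    rcases ih with ⟨x', y', hx, hy, hw⟩ | ⟨x', hx, hw⟩ | ⟨y', hy, hw⟩
    · obtain ⟨w', hred, hww'⟩ := add_inv (of_aeq_left hw.symm hs)
      cases hred with
      | left h => exact .inl ⟨_, y', hx.tail h, hy, hww'⟩
      | right h => exact .inl ⟨x', _, hx, hy.tail h, hww'⟩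
      | zeroLeft => exact .inr (.inr ⟨y', hy, hww'⟩)
      | zeroRight => exact .inr (.inl ⟨x', hx, hww'⟩)
    · exact .inr (.inl ⟨_, hx.tail (of_aeq_left hw.symm hs), .refl _⟩)
    · exact .inr (.inr ⟨_, hy.tail (of_aeq_left hw.symm hs), .refl _⟩)

end Step

/-! ## Strong normalisation and sub-sums -/

namespace SN

theorem of_aeq {t t' : Tm} (h : Aeq t t') (ht : SN t) : SN t' :=
  ⟨t', fun _ hw => ht.inv (Step.of_aeq_left h hw)⟩

theorem add {t u : Tm} (ht : SN t) (hu : SN u) : SN (.add t u) := by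
  induction ht generalizing u with
  | intro t hacc iht =>
  induction hu with
  | intro u hacc' ihu =>
  refine ⟨_, fun w hw => ?_⟩
  obtain ⟨w', hred, hww'⟩ := Step.add_inv hw
  refine of_aeq hww'.symm ?_
  cases hred with
  | left h => exact iht _ h ⟨u, hacc'⟩
  | right h => exact ihu _ h
  | zeroLeft => exact ⟨u, hacc'⟩
  | zeroRight => exact ⟨t, hacc⟩

end SN

def SubSum (x t : Tm) : Prop := ∃ M ≤ summands t, (summands x).Rel Aeq M

namespace SubSum

theorem refl (t : Tm) : SubSum t t := ⟨summands t, le_rfl, Aeq.rel_refl _⟩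

theorem of_rel_of_le {x t : Tm} {M N P : Multiset Tm} (hx : (summands x).Rel Aeq M)
    (hMN : M ≤ N) (hNP : N.Rel Aeq P) (hP : P ≤ summands t) : SubSum x t := by
  obtain ⟨R, rfl⟩ := Multiset.le_iff_exists_add.1 hMN
  obtain ⟨P₁, P₂, hM, -, rfl⟩ := Multiset.rel_add_left.1 hNP
  exact ⟨P₁, (Multiset.le_add_right _ _).trans hP, Aeq.rel_trans hx hM⟩

theorem trans {x y t : Tm} (hxy : SubSum x y) (hyt : SubSum y t) : SubSum x t :=
  let ⟨_, hM, hx⟩ := hxy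
  let ⟨_, hN, hy⟩ := hyt
  of_rel_of_le hx hM hy hN

theorem of_aeq_add {t x y : Tm} (h : Aeq t (.add x y)) : SubSum x t ∧ SubSum y t := by
  obtain ⟨M₁, M₂, hx, hy, hsum⟩ := Multiset.rel_add_left.1 (Aeq.rel_symm (Aeq.summands_rel h))
  exact ⟨⟨M₁, hsum ▸ Multiset.le_add_right _ _, hx⟩, ⟨M₂, hsum ▸ Multiset.le_add_left _ _, hy⟩⟩

theorem exists_step {x t x' : Tm} (h : SubSum x t) (hs : Step x x') :
    ∃ t', Step t t' ∧ SubSum x' t' := by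
  obtain ⟨M, hle, hrel⟩ := h
  rcases Step.summands_cases hs with ⟨a, ha, a', hstep, hrel'⟩ | ⟨hz, hrel'⟩
  · obtain ⟨b, hbM, hba, herase⟩ := Aeq.rel_erase_of_mem_right (Aeq.rel_symm hrel) ha
    obtain ⟨t', hst, hrelt⟩ :=
      Step.exists_of_mem_summands (Multiset.mem_of_le hle hbM) (Step.of_aeq_left hba hstep)
    exact ⟨t', hst, of_rel_of_le (Aeq.rel_trans hrel' ((Aeq.rel_symm herase).add (Aeq.rel_refl _)))
      (add_le_add_left (Multiset.erase_le_erase b hle) _) (Aeq.rel_symm hrelt) le_rfl⟩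
  · obtain ⟨b, hbM, hb0, herase⟩ := Aeq.rel_erase_of_mem_right (Aeq.rel_symm hrel) hz
    obtain rfl := Aeq.zero_left hb0.symm
    have hx : (summands x).erase zero ≠ 0 := fun h0 =>
      Step.not_zero (eq_of_mem_summands_of_erase_eq_zero hz h0 ▸ hs)
    have hM : M.erase zero ≠ 0 := fun h0 => hx (by rwa [h0, Multiset.rel_zero_left] at herase)
    have ht : (summands t).erase zero ≠ 0 :=
      fun h0 => hM (Multiset.le_zero.1 (h0 ▸ Multiset.erase_le_erase _ hle))
    obtain ⟨t', hst, hrelt⟩ := Step.exists_erase_zero (Multiset.mem_of_le hle hbM) ht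
    exact ⟨t', hst, of_rel_of_le (Aeq.rel_trans hrel' (Aeq.rel_symm herase))
      (Multiset.erase_le_erase _ hle) (Aeq.rel_symm hrelt) le_rfl⟩

theorem exists_reflTransGen {x t w : Tm} (h : SubSum x t) (hw : Relation.ReflTransGen Step x w) :
    ∃ t', Relation.ReflTransGen Step t t' ∧ SubSum w t' := by
  induction hw with
  | refl => exact ⟨t, .refl, h⟩
  | tail _ hs ih =>
    obtain ⟨t', ht', hsub⟩ := ih
    obtain ⟨t'', hs', hsub'⟩ := hsub.exists_step hs
    exact ⟨t'', ht'.tail hs', hsub'⟩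

end SubSum

theorem SN.of_subSum {x t : Tm} (ht : SN t) (h : SubSum x t) : SN x := by
  induction ht generalizing x with
  | intro t _ ih =>
    refine ⟨x, fun x' hx' => ?_⟩
    obtain ⟨t', hst, hsub⟩ := h.exists_step hx'
    exact ih t' hst hsub

def ProperSubSum (x p : Tm) : Prop :=
  SubSum x p ∧ Multiset.card (summands x) < Multiset.card (summands p)

theorem ProperSubSum.of_aeq_add {p x₁ x₂ : Tm} (h : Aeq p (.add x₁ x₂)) :
    ProperSubSum x₁ p ∧ ProperSubSum x₂ p := by
  have hcard := Multiset.card_eq_card_of_rel (Aeq.summands_rel h)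
  simp only [summands, Multiset.card_add] at hcard
  have h₁ := Multiset.card_pos.2 (summands_ne_zero x₁)
  have h₂ := Multiset.card_pos.2 (summands_ne_zero x₂)
  exact ⟨⟨(SubSum.of_aeq_add h).1, by omega⟩, ⟨(SubSum.of_aeq_add h).2, by omega⟩⟩

def StepOrProperSubSum (x p : Tm) : Prop := Step p x ∨ ProperSubSum x p

theorem SN.acc_stepOrProperSubSum {p : Tm} (hp : SN p) : Acc StepOrProperSubSum p := by
  suffices ∀ n x, Multiset.card (summands x) ≤ n → SubSum x p → Acc StepOrProperSubSum x from
    this _ p le_rfl (.refl p)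
  induction hp with
  | intro p _ ih =>
  intro n
  induction n with
  | zero => intro x hx; exact absurd hx (by simpa using summands_ne_zero x)
  | succ n ihn =>
    refine fun x hx hsub => ⟨x, fun y hy => ?_⟩
    rcases hy with hstep | ⟨hsub', hlt⟩
    · obtain ⟨p', hp', hsub''⟩ := hsub.exists_step hstep
      exact ih p' hp' _ y le_rfl hsub''
    · exact ihn y (by omega) (hsub'.trans hsub)

theorem SN.of_subst {t v : Tm} {k : ℕ} (hv : IsValue v) (h : SN (Tm.subst k v t)) : SN t := by
  generalize hs : Tm.subst k v t = s at h
  induction h generalizing t with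
  | intro s _ ih =>
    subst hs
    exact ⟨t, fun w hw => ih _ (hw.subst hv k) rfl⟩

theorem SN.lam {b : Tm} (hb : SN b) : SN (.lam b) := by
  induction hb with
  | intro b _ ih =>
    refine ⟨_, fun w hw => ?_⟩
    obtain ⟨b', hbb', hw⟩ := Step.lam_inv hw
    exact (ih b' hbb').of_aeq hw.symm

/-! ## Realizers -/

def IsLam (t : Tm) : Prop := ∃ b, t = .lam b

def AeqClosed (S : Set Tm) : Prop := ∀ ⦃p p'⦄, Aeq p p' → p ∈ S → p' ∈ S

def LamSummandsIn (S : Set Tm) (t : Tm) : Prop := ∀ p ∈ summands t, IsLam p → p ∈ S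

def Realizers (S : Set Tm) : Set Tm :=
  {t | SN t ∧ ∀ w, Relation.ReflTransGen Step t w → LamSummandsIn S w}

theorem LamSummandsIn.of_subSum {S : Set Tm} (hS : AeqClosed S) {x w : Tm} (hw : SubSum w x)
    (hx : LamSummandsIn S x) : LamSummandsIn S w := by
  obtain ⟨M, hle, hrel⟩ := hw
  rintro p hp ⟨b, rfl⟩
  obtain ⟨a, ha, hap, -⟩ := Aeq.rel_erase_of_mem_right (Aeq.rel_symm hrel) hp
  obtain ⟨b', rfl, -⟩ := (Aeq.shape hap).2
  exact hS hap (hx _ (Multiset.mem_of_le hle ha) ⟨b', rfl⟩)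

theorem LamSummandsIn.of_rel {S : Set Tm} (hS : AeqClosed S) {x w : Tm}
    (hrel : (summands w).Rel Aeq (summands x)) (hx : LamSummandsIn S x) : LamSummandsIn S w :=
  hx.of_subSum hS ⟨_, le_rfl, hrel⟩

namespace Realizers

variable {S : Set Tm}

theorem sn {t : Tm} (h : t ∈ Realizers S) : SN t := h.1

theorem lamSummandsIn {t : Tm} (h : t ∈ Realizers S) : LamSummandsIn S t := h.2 t .refl

theorem mono {S' : Set Tm} (h : S ⊆ S') : Realizers S ⊆ Realizers S' :=
  fun _ ht => ⟨ht.1, fun w hw p hp hl => h (ht.2 w hw p hp hl)⟩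

theorem reflTransGen {t w : Tm} (h : t ∈ Realizers S) (hw : Relation.ReflTransGen Step t w) :
    w ∈ Realizers S := by
  induction hw with
  | refl => exact h
  | tail _ hs ih => exact ⟨ih.1.inv hs, fun w' hw' => ih.2 w' (.head hs hw')⟩

theorem step {t w : Tm} (h : t ∈ Realizers S) (hw : Step t w) : w ∈ Realizers S :=
  reflTransGen h (.single hw)

theorem of_forall_step {t : Tm} (hred : ∀ w, Step t w → w ∈ Realizers S)
    (ht : LamSummandsIn S t) : t ∈ Realizers S := by
  refine ⟨⟨t, fun w hw => (hred w hw).1⟩, fun w hw => ?_⟩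
  rcases hw.cases_head with rfl | ⟨w₁, h₁, h₂⟩
  · exact ht
  · exact lamSummandsIn (reflTransGen (hred w₁ h₁) h₂)

theorem of_aeq (hS : AeqClosed S) {t t' : Tm} (h : Aeq t t') (ht : t ∈ Realizers S) :
    t' ∈ Realizers S :=
  of_forall_step (fun _ hw => step ht (Step.of_aeq_left h hw))
    ((lamSummandsIn ht).of_rel hS (Aeq.summands_rel h.symm))

theorem of_subSum (hS : AeqClosed S) {x t : Tm} (hsub : SubSum x t) (ht : t ∈ Realizers S) :
    x ∈ Realizers S := by
  refine ⟨(sn ht).of_subSum hsub, fun w hw => ?_⟩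
  obtain ⟨t', ht', hsub'⟩ := hsub.exists_reflTransGen hw
  exact (lamSummandsIn (reflTransGen ht ht')).of_subSum hS hsub'

theorem add (hS : AeqClosed S) {x y : Tm} (hx : x ∈ Realizers S) (hy : y ∈ Realizers S) :
    .add x y ∈ Realizers S := by
  refine ⟨(sn hx).add (sn hy), fun w hw => ?_⟩
  rcases Step.reflTransGen_add_inv hw with ⟨x', y', hx', hy', hw⟩ | ⟨x', hx', hw⟩ | ⟨y', hy', hw⟩
  · refine LamSummandsIn.of_rel hS (Aeq.summands_rel hw) fun p hp => ?_
    rcases Multiset.mem_add.1 hp with hp | hp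
    · exact (lamSummandsIn (reflTransGen hx hx')) p hp
    · exact (lamSummandsIn (reflTransGen hy hy')) p hp
  · exact (lamSummandsIn (reflTransGen hx hx')).of_rel hS (Aeq.summands_rel hw)
  · exact (lamSummandsIn (reflTransGen hy hy')).of_rel hS (Aeq.summands_rel hw)

theorem zero_mem : Tm.zero ∈ Realizers S :=
  of_forall_step (fun _ h => absurd h Step.not_zero) (by simp [LamSummandsIn, summands, IsLam])

theorem var_mem (n : ℕ) : Tm.var n ∈ Realizers S :=
  of_forall_step (fun _ h => absurd h Step.not_var) (by simp [LamSummandsIn, summands, IsLam])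

end Realizers

theorem Realizers.app {S₁ S₂ S₃ : Set Tm} (hS₁ : AeqClosed S₁) (hS₂ : AeqClosed S₂)
    (hS₃ : AeqClosed S₃)
    (hβ : ∀ b, .lam b ∈ S₁ → ∀ v, IsValue v → v ∈ S₂ ∪ Set.range var →
      Tm.subst 0 v b ∈ Realizers S₃)
    {p q : Tm} (hp : p ∈ Realizers S₁) (hq : q ∈ Realizers S₂) : .app p q ∈ Realizers S₃ := by
  -- Distributing `p q` over a sum leaves applications of proper sub-sums of `p` or `q`.
  induction (sn hp).acc_stepOrProperSubSum generalizing q with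
  | intro p _ ihp =>
  induction (sn hq).acc_stepOrProperSubSum with
  | intro q hq' ihq =>
  refine of_forall_step (fun w hw => ?_) (by simp [LamSummandsIn, summands, IsLam])
  obtain ⟨w', hred, hww'⟩ := Step.app_inv hw
  refine of_aeq hS₃ hww'.symm ?_
  cases hred with
  | left h => exact ihp _ (.inl h) (step hp h) hq
  | right h => exact ihq _ (.inl h) (step hq h)
  | distrRight h =>
    obtain ⟨h₁, h₂⟩ := ProperSubSum.of_aeq_add h
    exact add hS₃ (ihp _ (.inr h₁) (of_subSum hS₁ h₁.1 hp) hq)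
      (ihp _ (.inr h₂) (of_subSum hS₁ h₂.1 hp) hq)
  | distrLeft h =>
    obtain ⟨h₁, h₂⟩ := ProperSubSum.of_aeq_add h
    exact add hS₃ (ihq _ (.inr h₁) (of_subSum hS₂ h₁.1 hq))
      (ihq _ (.inr h₂) (of_subSum hS₂ h₂.1 hq))
  | zeroApp | appZero => exact zero_mem
  | beta hpb hv =>
    subst hpb
    refine hβ _ (lamSummandsIn hp _ (by simp [summands]) ⟨_, rfl⟩) q hv ?_
    cases hv with
    | var n => exact .inr ⟨n, rfl⟩
    | lam c => exact .inl (lamSummandsIn hq _ (by simp [summands]) ⟨c, rfl⟩)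

/-! ## Interpretation of types -/

structure Admissible (A : Set Tm) : Prop where
  aeqClosed : AeqClosed A
  isLam : ∀ p ∈ A, IsLam p
  sn : ∀ p ∈ A, SN p
  step : ∀ p ∈ A, ∀ w, Step p w → w ∈ A

theorem admissible_empty : Admissible ∅ :=
  ⟨fun _ _ _ h => h.elim, fun _ h => h.elim, fun _ h => h.elim, fun _ h => h.elim⟩

theorem Admissible.subset_realizers {A : Set Tm} (hA : Admissible A) : A ⊆ Realizers A := by
  refine fun p hp => ⟨hA.sn p hp, fun w hw => ?_⟩
  have hwA : w ∈ A := by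
    induction hw with
    | refl => exact hp
    | tail _ hs ih => exact hA.step _ ih _ hs
  obtain ⟨b, rfl⟩ := hA.isLam w hwA
  intro q hq _
  rwa [Multiset.mem_singleton.1 hq]

theorem admissible_consV {A : Set Tm} {ρ : ℕ → Set Tm} (hA : Admissible A)
    (hρ : ∀ n, Admissible (ρ n)) : ∀ n, Admissible (consV A ρ n)
  | 0 => hA
  | n + 1 => hρ n

/- Variables are admitted as arguments of every arrow type, so that adequacy applies to open
terms. -/
mutual

def UTy.sem : UTy → (ℕ → Set Tm) → Set Tm
  | .var n, ρ => ρ n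
  | .arrow U T, ρ =>
      {p | ∃ b, p = .lam b ∧ SN p ∧
        ∀ v, IsValue v → v ∈ U.sem ρ ∪ Set.range var → Tm.subst 0 v b ∈ Realizers (T.sem ρ)}
  | .all U, ρ => {p | ∀ A, Admissible A → p ∈ U.sem (consV A ρ)}

def Ty.sem : Ty → (ℕ → Set Tm) → Set Tm
  | .unit U, ρ => U.sem ρ
  | .add T R, ρ => T.sem ρ ∪ R.sem ρ
  | .zero, _ => ∅

end

mutual

theorem UTy.admissible_sem : ∀ (U : UTy) {ρ : ℕ → Set Tm}, (∀ n, Admissible (ρ n)) →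
    Admissible (U.sem ρ)
  | .var n, _, hρ => hρ n
  | .arrow U T, ρ, hρ => by
    have hT := (T.admissible_sem hρ).aeqClosed
    refine ⟨?_, ?_, ?_, ?_⟩
    · rintro p p' hpp' ⟨b, rfl, hsn, hb⟩
      obtain ⟨b', rfl, hbb'⟩ := Aeq.lam_left hpp'
      exact ⟨b', rfl, hsn.of_aeq hpp', fun v hv hvU =>
        Realizers.of_aeq hT (hbb'.subst_left 0 v) (hb v hv hvU)⟩
    · rintro p ⟨b, rfl, -⟩
      exact ⟨b, rfl⟩
    · rintro p ⟨b, rfl, hsn, -⟩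
      exact hsn
    · rintro p ⟨b, rfl, hsn, hb⟩ w hw
      obtain ⟨b', hbb', hw'⟩ := Step.lam_inv hw
      obtain ⟨b'', rfl, hb''⟩ := Aeq.lam_left hw'.symm
      exact ⟨b'', rfl, hsn.inv hw, fun v hv hvU => Realizers.of_aeq hT (hb''.subst_left 0 v)
        (Realizers.step (hb v hv hvU) (hbb'.subst hv 0))⟩
  | .all U, ρ, hρ => by
    have hU : ∀ A, Admissible A → Admissible (U.sem (consV A ρ)) :=
      fun A hA => U.admissible_sem (admissible_consV hA hρ)
    refine ⟨fun p p' hpp' hp A hA => (hU A hA).aeqClosed hpp' (hp A hA),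
      fun p hp => (hU ∅ admissible_empty).isLam p (hp ∅ admissible_empty),
      fun p hp => (hU ∅ admissible_empty).sn p (hp ∅ admissible_empty),
      fun p hp w hw A hA => (hU A hA).step p (hp A hA) w hw⟩

theorem Ty.admissible_sem : ∀ (T : Ty) {ρ : ℕ → Set Tm}, (∀ n, Admissible (ρ n)) →
    Admissible (T.sem ρ)
  | .unit U, _, hρ => U.admissible_sem hρ
  | .add T R, _, hρ => by
    obtain ⟨hT₁, hT₂, hT₃, hT₄⟩ := T.admissible_sem hρ
    obtain ⟨hR₁, hR₂, hR₃, hR₄⟩ := R.admissible_sem hρ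
    refine ⟨?_, ?_, ?_, ?_⟩
    · rintro p p' hpp' (hp | hp)
      exacts [.inl (hT₁ hpp' hp), .inr (hR₁ hpp' hp)]
    · rintro p (hp | hp)
      exacts [hT₂ p hp, hR₂ p hp]
    · rintro p (hp | hp)
      exacts [hT₃ p hp, hR₃ p hp]
    · rintro p (hp | hp) w hw
      exacts [.inl (hT₄ p hp w hw), .inr (hR₄ p hp w hw)]
  | .zero, _, _ => admissible_empty

end

def liftVal (d c : ℕ) (ρ : ℕ → Set Tm) : ℕ → Set Tm :=
  fun n => if n < c then ρ n else ρ (n + d)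

def substVal (k : ℕ) (V : UTy) (ρ : ℕ → Set Tm) : ℕ → Set Tm :=
  fun n => if n < k then ρ n else if n = k then V.sem (fun m => ρ (m + k)) else ρ (n - 1)

theorem consV_liftVal (A : Set Tm) (d c : ℕ) (ρ : ℕ → Set Tm) :
    consV A (liftVal d c ρ) = liftVal d (c + 1) (consV A ρ) := by
  funext n
  cases n with
  | zero => simp [consV, liftVal]
  | succ n => simp only [consV, liftVal]; split_ifs <;> first | omega | simp [Nat.add_right_comm]

theorem consV_substVal (A : Set Tm) (k : ℕ) (V : UTy) (ρ : ℕ → Set Tm) :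
    consV A (substVal k V ρ) = substVal (k + 1) V (consV A ρ) := by
  funext n
  cases n with
  | zero => simp [consV, substVal]
  | succ n =>
    simp only [consV, substVal]
    split_ifs <;> try first | omega | rfl
    obtain ⟨m, rfl⟩ : ∃ m, n = m + 1 := ⟨n - 1, by omega⟩
    rfl

mutual

theorem UTy.sem_shift : ∀ (U : UTy) (ρ : ℕ → Set Tm) (d c : ℕ),
    (UTy.shift d c U).sem ρ = U.sem (liftVal d c ρ)
  | .var n, ρ, d, c => by
    simp only [UTy.shift]
    split_ifs <;> simp [UTy.sem, liftVal, *]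
  | .arrow U T, ρ, d, c => by
    simp only [UTy.shift, UTy.sem, U.sem_shift, T.sem_shift]
  | .all U, ρ, d, c => by
    simp only [UTy.shift, UTy.sem, U.sem_shift, consV_liftVal]

theorem Ty.sem_shift : ∀ (T : Ty) (ρ : ℕ → Set Tm) (d c : ℕ),
    (Ty.shift d c T).sem ρ = T.sem (liftVal d c ρ)
  | .unit U, ρ, d, c => U.sem_shift ρ d c
  | .add T R, ρ, d, c => by simp only [Ty.shift, Ty.sem, T.sem_shift, R.sem_shift]
  | .zero, _, _, _ => rfl

end

mutual

theorem UTy.sem_subst : ∀ (U : UTy) (ρ : ℕ → Set Tm) (k : ℕ) (V : UTy),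
    (UTy.subst k V U).sem ρ = U.sem (substVal k V ρ)
  | .var n, ρ, k, V => by
    simp only [UTy.subst]
    split_ifs with h₁ h₂
    · simp only [UTy.sem_shift, UTy.sem, substVal, h₁, lt_irrefl, if_false, if_true]
      rfl
    · simp [UTy.sem, substVal, h₁, show ¬ n < k by omega]
    · simp [UTy.sem, substVal, show n < k by omega]
  | .arrow U T, ρ, k, V => by
    simp only [UTy.subst, UTy.sem, U.sem_subst, T.sem_subst]
  | .all U, ρ, k, V => by
    simp only [UTy.subst, UTy.sem, U.sem_subst, consV_substVal]

theorem Ty.sem_subst : ∀ (T : Ty) (ρ : ℕ → Set Tm) (k : ℕ) (V : UTy),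
    (Ty.subst k V T).sem ρ = T.sem (substVal k V ρ)
  | .unit U, ρ, k, V => U.sem_subst ρ k V
  | .add T R, ρ, k, V => by simp only [Ty.subst, Ty.sem, T.sem_subst, R.sem_subst]
  | .zero, _, _, _ => rfl

end

theorem UTy.sem_subst_zero (U V : UTy) (ρ : ℕ → Set Tm) :
    (UTy.subst 0 V U).sem ρ = U.sem (consV (V.sem ρ) ρ) := by
  rw [U.sem_subst]
  congr 1
  funext n
  cases n <;> rfl

mutual

theorem UEq.sem_eq {U U' : UTy} : UEq U U' → ∀ ρ, U.sem ρ = U'.sem ρ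
  | .refl _, _ => rfl
  | .symm h, ρ => (h.sem_eq ρ).symm
  | .trans h h', ρ => (h.sem_eq ρ).trans (h'.sem_eq ρ)
  | .arrow hU hT, ρ => by simp only [UTy.sem, hU.sem_eq ρ, hT.sem_eq ρ]
  | .all hU, ρ => by simp only [UTy.sem, hU.sem_eq]

theorem TEq.sem_eq {T T' : Ty} : TEq T T' → ∀ ρ, T.sem ρ = T'.sem ρ
  | .refl _, _ => rfl
  | .symm h, ρ => (h.sem_eq ρ).symm
  | .trans h h', ρ => (h.sem_eq ρ).trans (h'.sem_eq ρ)
  | .unit h, ρ => h.sem_eq ρ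
  | .addCongr hT hR, ρ => by simp only [Ty.sem, hT.sem_eq ρ, hR.sem_eq ρ]
  | .comm _ _, _ => Set.union_comm _ _
  | .assoc _ _ _, _ => (Set.union_assoc _ _ _).symm
  | .zero _, _ => Set.union_empty _

end

theorem Ty.mem_sem_foldl_add (Ts : List Ty) (acc : Ty) (ρ : ℕ → Set Tm) (p : Tm) :
    p ∈ (Ts.foldl Ty.add acc).sem ρ ↔ p ∈ acc.sem ρ ∨ ∃ T ∈ Ts, p ∈ T.sem ρ := by
  induction Ts generalizing acc with
  | nil => simp
  | cons T Ts ih => simp [ih, Ty.sem, or_assoc]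

theorem Ty.mem_sem_sumT {Ts : List Ty} {ρ : ℕ → Set Tm} {p : Tm} :
    p ∈ (sumT Ts).sem ρ ↔ ∃ T ∈ Ts, p ∈ T.sem ρ := by
  simp [sumT, Ty.mem_sem_foldl_add, Ty.sem]

theorem UTy.msubst_arrow (Vs : List UTy) (U : UTy) (T : Ty) :
    UTy.msubst Vs (.arrow U T) = .arrow (UTy.msubst Vs U) (Ty.msubst Vs T) := by
  induction Vs generalizing U T with
  | nil => rfl
  | cons V Vs ih => exact ih _ _

theorem UTy.sem_shift_one_consV (U : UTy) (A : Set Tm) (ρ : ℕ → Set Tm) :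
    (UTy.shift 1 0 U).sem (consV A ρ) = U.sem ρ := by
  rw [U.sem_shift]
  congr 1

section Instantiation

variable {ρ : ℕ → Set Tm}

theorem UTy.sem_all_subset_subst (U V : UTy) (hρ : ∀ n, Admissible (ρ n)) :
    (UTy.all U).sem ρ ⊆ (UTy.subst 0 V U).sem ρ := fun p hp => by
  rw [UTy.sem_subst_zero]
  exact hp _ (V.admissible_sem hρ)

theorem UTy.sem_allN_succ_subset (k : ℕ) (W V : UTy) (hρ : ∀ n, Admissible (ρ n)) :
    (allN (k + 1) W).sem ρ ⊆ (allN k (UTy.subst 0 V W)).sem ρ := by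
  induction k generalizing ρ with
  | zero => exact W.sem_all_subset_subst V hρ
  | succ k ih => exact fun p hp A hA => ih (admissible_consV hA hρ) (hp A hA)

theorem UTy.sem_allN_subset_msubst (Vs : List UTy) (W : UTy) (hρ : ∀ n, Admissible (ρ n)) :
    (allN Vs.length W).sem ρ ⊆ (UTy.msubst Vs W).sem ρ := by
  induction Vs generalizing W with
  | nil => exact subset_rfl
  | cons V Vs ih => exact (UTy.sem_allN_succ_subset _ W V hρ).trans (ih _)

end Instantiation

/-! ## Adequacy -/

def SemCtx (Γ : List UTy) (ρ : ℕ → Set Tm) (σ : ℕ → Tm) : Prop :=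
  ∀ n U, Γ[n]? = some U → IsValue (σ n) ∧ σ n ∈ U.sem ρ ∪ Set.range var

theorem SemCtx.cons {Γ : List UTy} {ρ : ℕ → Set Tm} {σ : ℕ → Tm} (hσ : SemCtx Γ ρ σ) {U : UTy}
    {v : Tm} (hv : IsValue v) (hvU : v ∈ U.sem ρ ∪ Set.range var) :
    SemCtx (U :: Γ) ρ (consSub v σ)
  | 0, _, h => by cases h; exact ⟨hv, hvU⟩
  | n + 1, U', h => hσ n U' h

theorem SemCtx.liftCtx {Γ : List UTy} {ρ : ℕ → Set Tm} {σ : ℕ → Tm} (hσ : SemCtx Γ ρ σ)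
    (A : Set Tm) : SemCtx (liftCtx Γ) (consV A ρ) σ := by
  intro n U hn
  simp only [_root_.liftCtx, List.getElem?_map, Option.map_eq_some_iff] at hn
  obtain ⟨U₀, hU₀, rfl⟩ := hn
  rw [UTy.sem_shift_one_consV]
  exact hσ n U₀ hU₀

def SemTyping (Γ : List UTy) (t : Tm) (T : Ty) : Prop :=
  ∀ ρ σ, (∀ n, Admissible (ρ n)) → SemCtx Γ ρ σ → Tm.msubst σ t ∈ Realizers (T.sem ρ)

namespace SemTyping

variable {Γ : List UTy} {t u : Tm}

theorem ax {n : ℕ} {U : UTy} (h : Γ[n]? = some U) : SemTyping Γ (.var n) (.unit U) := by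
  intro ρ σ hρ hσ
  rcases (hσ n U h).2 with hU | ⟨m, hm⟩
  · exact Admissible.subset_realizers (U.admissible_sem hρ) hU
  · rw [Tm.msubst, ← hm]
    exact Realizers.var_mem m

theorem axZero : SemTyping Γ .zero .zero :=
  fun _ _ _ _ => Realizers.zero_mem

theorem equiv {T R : Ty} (h : SemTyping Γ t T) (hTR : TEq T R) : SemTyping Γ t R := by
  intro ρ σ hρ hσ
  rw [← hTR.sem_eq ρ]
  exact h ρ σ hρ hσ

theorem arrI {U : UTy} {T : Ty} (h : SemTyping (U :: Γ) t T) :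
    SemTyping Γ (.lam t) (.unit (.arrow U T)) := by
  intro ρ σ hρ hσ
  have hbody : ∀ v, IsValue v → v ∈ U.sem ρ ∪ Set.range var →
      Tm.subst 0 v (Tm.msubst (liftSub σ) t) ∈ Realizers (T.sem ρ) := fun v hv hvU => by
    rw [Tm.subst_zero_msubst_liftSub]
    exact h ρ _ hρ (hσ.cons hv hvU)
  have hsn : SN (Tm.msubst (liftSub σ) t) :=
    SN.of_subst (.var 0) (Realizers.sn (hbody _ (.var 0) (.inr ⟨0, rfl⟩)))
  exact Admissible.subset_realizers ((UTy.arrow U T).admissible_sem hρ) ⟨_, rfl, hsn.lam, hbody⟩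

theorem arrE {k : ℕ} {U : UTy} {Ts : List Ty} {Vs : List (List UTy)} (hVs : Vs ≠ [])
    (hlen : ∀ V ∈ Vs, V.length = k)
    (ht : SemTyping Γ t (sumT (Ts.map fun Ti => .unit (allN k (.arrow U Ti)))))
    (hu : SemTyping Γ u (sumT (Vs.map fun Vj => .unit (UTy.msubst Vj U)))) :
    SemTyping Γ (.app t u)
      (sumT ((Ts.map fun Ti => Vs.map fun Vj => Ty.msubst Vj Ti).flatten)) := by
  intro ρ σ hρ hσ
  refine Realizers.app (Ty.admissible_sem _ hρ).aeqClosed (Ty.admissible_sem _ hρ).aeqClosed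
    (Ty.admissible_sem _ hρ).aeqClosed ?_ (ht ρ σ hρ hσ) (hu ρ σ hρ hσ)
  intro b hb v hv hvU
  obtain ⟨_, hmem, hbTi⟩ := Ty.mem_sem_sumT.1 hb
  obtain ⟨Ti, hTi, rfl⟩ := List.mem_map.1 hmem
  have hinst : ∀ Vj ∈ Vs, v ∈ (UTy.msubst Vj U).sem ρ ∪ Set.range var →
      Tm.subst 0 v b ∈ Realizers (Ty.sem (sumT
        ((Ts.map fun Ti => Vs.map fun Vj => Ty.msubst Vj Ti).flatten)) ρ) := by
    intro Vj hVj hvVj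
    rw [← hlen Vj hVj] at hbTi
    have hlam := UTy.sem_allN_subset_msubst Vj _ hρ hbTi
    rw [UTy.msubst_arrow] at hlam
    obtain ⟨b', ⟨⟩, -, hbody⟩ := hlam
    refine Realizers.mono (fun q hq => Ty.mem_sem_sumT.2 ⟨_, ?_, hq⟩) (hbody v hv hvVj)
    exact List.mem_flatten.2 ⟨_, List.mem_map.2 ⟨Ti, hTi, rfl⟩, List.mem_map.2 ⟨Vj, hVj, rfl⟩⟩
  rcases hvU with hvS | hvar
  · obtain ⟨_, hmem, hvVj⟩ := Ty.mem_sem_sumT.1 hvS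
    obtain ⟨Vj, hVj, rfl⟩ := List.mem_map.1 hmem
    exact hinst Vj hVj (.inl hvVj)
  · obtain ⟨Vj, hVj⟩ := List.exists_mem_of_ne_nil Vs hVs
    exact hinst Vj hVj (.inr hvar)

theorem addI {T R : Ty} (ht : SemTyping Γ t T) (hu : SemTyping Γ u R) :
    SemTyping Γ (.add t u) (.add T R) := fun ρ σ hρ hσ =>
  Realizers.add (Ty.admissible_sem (.add T R) hρ).aeqClosed
    (Realizers.mono Set.subset_union_left (ht ρ σ hρ hσ))
    (Realizers.mono Set.subset_union_right (hu ρ σ hρ hσ))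

theorem allE {U : UTy} (V : UTy) (h : SemTyping Γ t (.unit (.all U))) :
    SemTyping Γ t (.unit (UTy.subst 0 V U)) := fun ρ σ hρ hσ =>
  Realizers.mono (U.sem_all_subset_subst V hρ) (h ρ σ hρ hσ)

theorem allI {U : UTy} (h : SemTyping (liftCtx Γ) t (.unit U)) :
    SemTyping Γ t (.unit (.all U)) := by
  intro ρ σ hρ hσ
  have hA : ∀ A, Admissible A → Tm.msubst σ t ∈ Realizers (U.sem (consV A ρ)) :=
    fun A hA => h _ σ (admissible_consV hA hρ) (hσ.liftCtx A)
  exact ⟨Realizers.sn (hA ∅ admissible_empty),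
    fun w hw p hp hl A hA' => (hA A hA').2 w hw p hp hl⟩

end SemTyping

theorem Typing.semTyping {Γ : List UTy} {t : Tm} {T : Ty} (h : Typing Γ t T) :
    SemTyping Γ t T := by
  induction h with
  | ax h => exact .ax h
  | axZero => exact .axZero
  | equiv _ hTR ih => exact ih.equiv hTR
  | arrI _ ih => exact ih.arrI
  | arrE _ hVs hlen _ _ ih₁ ih₂ => exact .arrE hVs hlen ih₁ ih₂
  | addI _ _ ih₁ ih₂ => exact ih₁.addI ih₂
  | allE V _ ih => exact ih.allE V
  | allI _ ih => exact ih.allI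

theorem Typing.sn {Γ : List UTy} {t : Tm} {T : Ty} (h : Typing Γ t T) : SN t := by
  have ht := h.semTyping (fun _ => ∅) var (fun _ => admissible_empty)
    (fun n _ _ => ⟨.var n, .inr ⟨n, rfl⟩⟩)
  rw [Tm.msubst_var] at ht
  exact Realizers.sn ht

/-- **Strong Normalisation** (Theorem 2).  Every term typable in Add is
strongly normalising: there is no infinite reduction sequence starting
from a typable term. -/
theorem strong_normalisation {Γ : List UTy} {t : Tm} {T : Ty}
    (ht : Typing Γ t T) :
    ¬ ∃ f : ℕ → Tm, f 0 = t ∧ ∀ n, Step (f n) (f (n + 1)) := by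
  exact fun hf => not_acc_iff_exists_descending_chain.2 hf ht.sn
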